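/- Let (X, μ) be a measure space and K : X × X → ℝ a measurable symmetric kernel (K(x,y) = K(y,x)) satisfying the reproducing property ∫_X K(x,y) K(y,z) dμ(y) = K(x,z) for all x, z ∈ X, and ∫_X K(x,x) dμ(x) = c for a real constant c. Let n ≥ 1 and assume that for every fixed x_1, …, x_{n−1} ∈ X the function y ↦ det( K(x_i, x_j) )_{i,j=1}^{n} (with x_n = y) is μ-integrable, as are all the functions y ↦ K(x,y)K(y,z). Then for all x_1, …, x_{n−1} ∈ X: ∫_X det( K(x_i, x_j) )_{i,j=1}^{n} dμ(x_n) = (c − n + 1) · det( K(x_i, x_j) )_{i,j=1}^{n−1}. -/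

import Mathlib

/-!
Border the Gram matrix `A = (K(xᵢ, xⱼ))` by the point `y` and expand along the new row and
column (Cauchy's expansion of a bordered determinant):
`det = K(y, y) det A - ∑ᵢⱼ K(y, xᵢ) (adj A)ᵢⱼ K(xⱼ, y)`.
Integrating in `y`, the first term gives `c det A`, while the reproducing property turns the
second into `∑ᵢⱼ (adj A)ᵢⱼ Aⱼᵢ = tr (adj A * A) = m det A`.
-/

open Fin

namespace Matrix

variable {R : Type*} [CommRing R] {m : ℕ}

theorem neg_one_pow_mul_det_submatrix_succAbove_castSucc
    (M : Matrix (Fin (m + 1)) (Fin (m + 1)) R) (k : Fin m) :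
    (-1) ^ (k + m : ℕ) * (M.submatrix (castSucc k).succAbove castSucc).det =
      -∑ i, M (last m) (castSucc i) * adjugate (M.submatrix castSucc castSucc) i k := by
  obtain ⟨n, rfl⟩ : ∃ n, m = n + 1 := ⟨m - 1, by have := k.pos; omega⟩
  rw [det_succ_row _ (last n), Finset.mul_sum, ← Finset.sum_neg_distrib]
  refine Finset.sum_congr rfl fun i _ => ?_
  have hrow : (castSucc k).succAbove (last n) = last (n + 1) :=
    succAbove_of_le_castSucc _ _ (castSucc_le_castSucc_iff.mpr k.le_last)
  have hminor : ((M.submatrix (castSucc k).succAbove castSucc).submatrix (last n).succAbove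
      i.succAbove) = (M.submatrix castSucc castSucc).submatrix k.succAbove i.succAbove := by
    ext a b
    simp [succAbove_last, castSucc_succAbove_castSucc]
  have hsign : (-1 : R) ^ (k + (n + 1) : ℕ) * (-1) ^ (n + i : ℕ) = -(-1) ^ (k + i : ℕ) := by
    rw [← pow_add, show (k : ℕ) + (n + 1) + (n + i) = k + i + 2 * n + 1 by ring, pow_succ,
      pow_add, pow_mul]
    simp
  rw [adjugate_fin_succ_eq_det_submatrix, submatrix_apply, hrow, hminor, val_last]
  linear_combination (M (last (n + 1)) (castSucc i) *
    ((M.submatrix castSucc castSucc).submatrix k.succAbove i.succAbove).det) * hsign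

theorem det_succ_eq_sub_sum_adjugate (M : Matrix (Fin (m + 1)) (Fin (m + 1)) R) :
    M.det = M (last m) (last m) * (M.submatrix castSucc castSucc).det -
      ∑ i, ∑ j, M (last m) (castSucc i) * adjugate (M.submatrix castSucc castSucc) i j *
        M (castSucc j) (last m) := by
  rw [det_succ_column M (last m), sum_univ_castSucc, succAbove_last, Finset.sum_comm]
  have hcorner : (-1 : R) ^ ((last m : ℕ) + last m) = 1 := by
    rw [← two_mul, pow_mul, neg_one_sq, one_pow]
  have hborder (k : Fin m) : (-1) ^ ((castSucc k : ℕ) + last m) * M (castSucc k) (last m) *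
      (M.submatrix (castSucc k).succAbove castSucc).det =
      -∑ i, M (last m) (castSucc i) * adjugate (M.submatrix castSucc castSucc) i k *
        M (castSucc k) (last m) := by
    rw [val_castSucc, val_last, mul_right_comm, neg_one_pow_mul_det_submatrix_succAbove_castSucc,
      neg_mul, Finset.sum_mul]
  rw [Finset.sum_congr rfl fun k _ => hborder k, hcorner, Finset.sum_neg_distrib]
  ring

theorem det_of_snoc {X : Type*} (K : X → X → R) (xs : Fin m → X) (y : X) :
    (of fun i j : Fin (m + 1) =>
        K ((snoc xs y : Fin (m + 1) → X) i) ((snoc xs y : Fin (m + 1) → X) j)).det =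
      K y y * (of fun i j => K (xs i) (xs j)).det -
        ∑ i, ∑ j, adjugate (of fun i j => K (xs i) (xs j)) i j * (K (xs j) y * K y (xs i)) := by
  rw [det_succ_eq_sub_sum_adjugate]
  simp only [submatrix, of_apply, snoc_last, snoc_castSucc]
  congr 1
  exact Fintype.sum_congr _ _ fun i => Fintype.sum_congr _ _ fun j => by ring

end Matrix

open MeasureTheory Matrix

theorem det_kernel_integrate_out {X : Type*} [MeasurableSpace X] (μ : Measure X)
    (K : X → X → ℝ)
    (hrepr : ∀ x z, ∫ y, K x y * K y z ∂μ = K x z)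
    (c : ℝ)
    (hdiag_int : Integrable (fun x => K x x) μ)
    (htrace : ∫ x, K x x ∂μ = c)
    (m : ℕ)
    (hprod_int : ∀ x z : X, Integrable (fun y => K x y * K y z) μ)
    (xs : Fin m → X) :
    ∫ y, (Matrix.of fun i j : Fin (m + 1) =>
        K ((Fin.snoc xs y : Fin (m + 1) → X) i) ((Fin.snoc xs y : Fin (m + 1) → X) j)).det ∂μ
      = (c - m) * (Matrix.of fun i j : Fin m => K (xs i) (xs j)).det := by
  set A := of fun i j : Fin m => K (xs i) (xs j)
  have hterm (i j : Fin m) :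
      Integrable (fun y => adjugate A i j * (K (xs j) y * K y (xs i))) μ :=
    (hprod_int _ _).const_mul _
  have hrow (i : Fin m) :
      Integrable (fun y => ∑ j, adjugate A i j * (K (xs j) y * K y (xs i))) μ :=
    integrable_finsetSum _ fun j _ => hterm i j
  calc _ = ∫ y, K y y * A.det - ∑ i, ∑ j, adjugate A i j * (K (xs j) y * K y (xs i)) ∂μ :=
        integral_congr_ae (.of_forall fun y => det_of_snoc K xs y)
    _ = c * A.det - (adjugate A * A).trace := by
        rw [integral_sub (hdiag_int.mul_const _) (integrable_finsetSum _ fun i _ => hrow i),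
          integral_mul_const, htrace, integral_finsetSum _ fun i _ => hrow i]
        simp_rw [integral_finsetSum _ fun j _ => hterm _ j, integral_const_mul, hrepr]
        rfl
    _ = (c - m) * A.det := by
        rw [adjugate_mul, trace_smul, trace_one, Fintype.card_fin, smul_eq_mul]
        ring
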